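/- arXiv:2104.12858 — 2 statements merged into one kernel-verified Lean document; each statement's English description precedes it below -/
import Mathlib

section
/- Let m ∈ ℝ and let Ω = ℂ ∖ (−∞, 0] be the cut plane with the principal branch of the square root. Then the function f(z) = e^{−iπ/4}·z^{−1/2}·exp(2m|z|) satisfies the massive holomorphicity equation ∂̄f + i·m·conj(f) = 0 on Ω, where ∂̄ = (∂_x + i∂_y)/2. -/
/-- The ∂̄ operator: `(∂_x h + i ∂_y h)/2` computed via the real Fréchet derivative. -/
noncomputable def dbar (h : ℂ → ℂ) (z : ℂ) : ℂ :=
  (fderiv ℝ h z 1 + Complex.I * fderiv ℝ h z Complex.I) / 2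

/-!
`z ↦ e^{-iπ/4} z^{-1/2}` is holomorphic, so by the Leibniz rule `∂̄` only sees the real factor
`exp (2m|z|)`, and `∂̄|z| = z / (2|z|)`. With `u = z^{-1/2}` the relation `u² z = 1` gives
`conj u = z u / |z|`, so both terms of the equation are `m e^{2m|z|} z u / |z|`, multiplied by
`e^{-iπ/4}` and by `i · conj e^{-iπ/4} = -e^{-iπ/4}` respectively.
-/

open Complex ComplexConjugate

theorem hasFDerivAt_norm_of_ne_zero {E : Type*} [NormedAddCommGroup E] [InnerProductSpace ℝ E]
    {x : E} (hx : x ≠ 0) : HasFDerivAt (fun y : E => ‖y‖) (‖x‖⁻¹ • innerSL ℝ x) x := by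
  have hsq := (hasStrictFDerivAt_norm_sq x).hasFDerivAt.sqrt (by simpa using hx)
  simp only [Real.sqrt_sq (norm_nonneg _)] at hsq
  convert hsq using 1
  rw [← ofNat_smul_eq_nsmul ℝ, smul_smul]
  congr 1
  field_simp

section Dbar

variable {f g : ℂ → ℂ} {z : ℂ}

theorem HasFDerivAt.dbar_eq {L : ℂ →L[ℝ] ℂ} (h : HasFDerivAt f L z) :
    dbar f z = (L 1 + I * L I) / 2 := by
  rw [dbar, h.fderiv]

theorem HasDerivAt.dbar_eq_zero {f' : ℂ} (h : HasDerivAt f f' z) : dbar f z = 0 := by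
  rw [(h.hasFDerivAt.restrictScalars ℝ).dbar_eq]
  simp [← mul_assoc]

theorem dbar_mul (hf : DifferentiableAt ℝ f z) (hg : DifferentiableAt ℝ g z) :
    dbar (fun w => f w * g w) z = f z * dbar g z + g z * dbar f z := by
  rw [HasFDerivAt.dbar_eq (f := fun w => f w * g w) (hf.hasFDerivAt.mul hg.hasFDerivAt),
    dbar, dbar]
  simp only [add_apply, smul_apply, smul_eq_mul]
  ring

theorem dbar_mul_of_differentiableAt (hf : DifferentiableAt ℂ f z)
    (hg : DifferentiableAt ℝ g z) : dbar (fun w => f w * g w) z = f z * dbar g z := by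
  rw [dbar_mul (hf.restrictScalars ℝ) hg, hf.hasDerivAt.dbar_eq_zero, mul_zero, add_zero]

theorem dbar_comp {F : ℂ → ℂ} {F' : ℂ} (hF : HasDerivAt F F' (g z))
    (hg : DifferentiableAt ℝ g z) : dbar (fun w => F (g w)) z = F' * dbar g z := by
  rw [HasFDerivAt.dbar_eq (f := fun w => F (g w)) (hF.comp_hasFDerivAt z hg.hasFDerivAt), dbar]
  simp only [smul_apply, smul_eq_mul]
  ring

theorem hasFDerivAt_ofReal_norm (hz : z ≠ 0) :
    HasFDerivAt (fun w : ℂ => (‖w‖ : ℂ)) (ofRealCLM.comp (‖z‖⁻¹ • innerSL ℝ z)) z :=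
  ofRealCLM.hasFDerivAt.comp z (hasFDerivAt_norm_of_ne_zero hz)

theorem dbar_ofReal_norm (hz : z ≠ 0) : dbar (fun w => (‖w‖ : ℂ)) z = z / (2 * ‖z‖) := by
  rw [(hasFDerivAt_ofReal_norm hz).dbar_eq]
  have hnorm : (‖z‖ : ℂ) ≠ 0 := by simpa using hz
  simp only [ContinuousLinearMap.comp_smulₛₗ, map_inv₀, Real.ringHom_apply, smul_apply,
    ContinuousLinearMap.comp_apply, coe_innerSL_apply, Complex.inner, one_mul, conj_re,
    ofRealCLM_apply, real_smul, ofReal_inv, mul_re, I_re, zero_mul, I_im, conj_im, mul_neg,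
    sub_neg_eq_add, zero_add]
  field_simp
  rw [mul_comm]
  exact re_add_im z

theorem dbar_exp_mul_ofReal_norm (a : ℂ) (hz : z ≠ 0) :
    dbar (fun w => exp (a * ‖w‖)) z = exp (a * ‖z‖) * (a * (z / (2 * ‖z‖))) := by
  have hnorm := (hasFDerivAt_ofReal_norm hz).differentiableAt
  rw [dbar_comp (g := fun w => a * ‖w‖) (hasDerivAt_exp _) (hnorm.const_mul a),
    dbar_mul_of_differentiableAt (differentiableAt_const a) hnorm, dbar_ofReal_norm hz]

end Dbar

theorem conj_eq_mul_div_norm_of_sq_mul_eq_one {u z : ℂ} (h : u ^ 2 * z = 1) :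
    conj u = z * u / ‖z‖ := by
  have hu : u ≠ 0 := by rintro rfl; simp at h
  have hz : (‖z‖ : ℂ) ≠ 0 := by rintro h'; simp_all
  have hnorm : (‖u‖ : ℂ) ^ 2 * ‖z‖ = 1 := by
    rw [← ofReal_pow, ← ofReal_mul, ← norm_pow, ← norm_mul, h, norm_one, ofReal_one]
  rw [eq_div_iff hz, ← mul_left_inj' hu]
  linear_combination (-1 : ℂ) * h + hnorm + (‖z‖ : ℂ) * conj_mul' u

theorem cpow_neg_half_sq_mul_self {z : ℂ} (hz : z ≠ 0) : (z ^ (-(1 / 2) : ℂ)) ^ 2 * z = 1 := by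
  rw [sq, ← cpow_add _ _ hz]
  norm_num [cpow_neg_one, hz]

theorem I_mul_conj_exp_neg_I_mul_pi_div_four :
    I * conj (exp (-I * (Real.pi / 4))) = -exp (-I * (Real.pi / 4)) := by
  have hconj : conj (-I * (Real.pi / 4 : ℂ)) = I * (Real.pi / 4) := by
    simp [map_ofNat]
  calc I * conj (exp (-I * (Real.pi / 4)))
      = exp (Real.pi / 2 * I) * exp (I * (Real.pi / 4)) := by
        rw [exp_pi_div_two_mul_I, ← exp_conj, hconj]
    _ = exp (Real.pi * I) * exp (-I * (Real.pi / 4)) := by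
        rw [← exp_add, ← exp_add]
        ring_nf
    _ = -exp (-I * (Real.pi / 4)) := by
        rw [exp_pi_mul_I, neg_one_mul]

theorem branching_kernel_satisfies_dirac (m : ℝ) :
    ∀ z ∈ Complex.slitPlane,
      dbar (fun w => Complex.exp (-Complex.I * (Real.pi / 4)) * w ^ (-(1 / 2) : ℂ)
          * Complex.exp (2 * (m : ℂ) * ‖w‖)) z
        + Complex.I * m * (starRingEnd ℂ)
            (Complex.exp (-Complex.I * (Real.pi / 4)) * z ^ (-(1 / 2) : ℂ)
              * Complex.exp (2 * (m : ℂ) * ‖z‖)) = 0 := by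
  intro z hz
  have hz0 : z ≠ 0 := slitPlane_ne_zero hz
  have hholo : DifferentiableAt ℂ (fun w => exp (-I * (Real.pi / 4)) * w ^ (-(1 / 2) : ℂ)) z :=
    (differentiableAt_const _).mul (differentiableAt_id.cpow_const hz)
  have hreal : DifferentiableAt ℝ (fun w => exp (2 * (m : ℂ) * ‖w‖)) z :=
    ((differentiable_exp (𝕜 := ℂ)).restrictScalars ℝ).differentiableAt.comp z
      ((hasFDerivAt_ofReal_norm hz0).differentiableAt.const_mul _)
  have hconj : conj (exp (2 * (m : ℂ) * ‖z‖)) = exp (2 * (m : ℂ) * ‖z‖) := by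
    rw [← exp_conj]
    simp [map_ofNat]
  rw [dbar_mul_of_differentiableAt hholo hreal, dbar_exp_mul_ofReal_norm _ hz0, map_mul, map_mul,
    hconj, conj_eq_mul_div_norm_of_sq_mul_eq_one (cpow_neg_half_sq_mul_self hz0)]
  linear_combination (m * exp (2 * (m : ℂ) * ‖z‖) * (z * z ^ (-(1 / 2) : ℂ) / ‖z‖)) *
    I_mul_conj_exp_neg_I_mul_pi_div_four
end

section
/- Let U ⊆ ℂ be open, m ∈ ℝ, and let f : U → ℂ be continuously differentiable with ∂̄f + i·m·conj(f) = 0 on U, where ∂̄ = (∂_x + i∂_y)/2. Then ∂_x(Re(f²)) = ∂_y(Im(f²)) on U; equivalently, the real 1-form Im(f²)dx + Re(f²)dy (i.e. Im[f(z)²dz]) is closed. -/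
/-!
`∂_x Re(f²) - ∂_y Im(f²) = Re(∂_x(f²) + i ∂_y(f²)) = 2 Re ∂̄(f²)`, and by the Leibniz rule
`∂̄(f²) = 2 f ∂̄f = -2 i m f f̄ = -2 i m |f|²`, which is purely imaginary.
-/

open Complex

section

variable {g : ℂ → ℂ} {z : ℂ}

theorem fderiv_re_apply (hg : DifferentiableAt ℝ g z) (v : ℂ) :
    fderiv ℝ (fun w => (g w).re) z v = (fderiv ℝ g z v).re :=
  congrArg (· v) (reCLM.hasFDerivAt.comp z hg.hasFDerivAt).fderiv

theorem fderiv_im_apply (hg : DifferentiableAt ℝ g z) (v : ℂ) :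
    fderiv ℝ (fun w => (g w).im) z v = (fderiv ℝ g z v).im :=
  congrArg (· v) (imCLM.hasFDerivAt.comp z hg.hasFDerivAt).fderiv

theorem fderiv_re_sub_fderiv_im_eq_re_dbar (hg : DifferentiableAt ℝ g z) :
    fderiv ℝ (fun w => (g w).re) z 1 - fderiv ℝ (fun w => (g w).im) z I
      = 2 * (dbar g z).re := by
  rw [fderiv_re_apply hg, fderiv_im_apply hg, dbar]
  simp only [div_ofNat_re, add_re, mul_re, I_re, I_im]
  ring

theorem dbar_sq (hg : DifferentiableAt ℝ g z) :
    dbar (fun w => g w ^ 2) z = 2 * g z * dbar g z := by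
  have hsq : HasFDerivAt (fun w => g w ^ 2) (g z • fderiv ℝ g z + g z • fderiv ℝ g z) z := by
    rw [show (fun w => g w ^ 2) = g * g from funext fun w => pow_two (g w)]
    exact hg.hasFDerivAt.mul hg.hasFDerivAt
  simp only [dbar, hsq.fderiv, add_apply, smul_apply, smul_eq_mul]
  ring

theorem dbar_sq_of_dbar_add_mul_conj_eq_zero (hg : DifferentiableAt ℝ g z) {m : ℝ}
    (hdirac : dbar g z + I * m * (starRingEnd ℂ) (g z) = 0) :
    dbar (fun w => g w ^ 2) z = -(2 * I * m * normSq (g z)) := by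
  rw [dbar_sq hg, ← mul_conj]
  linear_combination 2 * g z * hdirac

end

theorem massive_form_closed (U : Set ℂ) (hU : IsOpen U) (m : ℝ) (f : ℂ → ℂ)
    (hf : ContDiffOn ℝ 1 f U)
    (hdirac : ∀ z ∈ U, dbar f z + Complex.I * m * (starRingEnd ℂ) (f z) = 0) :
    ∀ z ∈ U,
      fderiv ℝ (fun w => ((f w) ^ 2).re) z 1
        = fderiv ℝ (fun w => ((f w) ^ 2).im) z Complex.I := by
  intro z hz
  have hdiff : DifferentiableAt ℝ f z :=
    (hf.contDiffAt (hU.mem_nhds hz)).differentiableAt one_ne_zero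
  have hdiff_sq : DifferentiableAt ℝ (fun w => f w ^ 2) z := hdiff.pow 2
  rw [← sub_eq_zero, fderiv_re_sub_fderiv_im_eq_re_dbar hdiff_sq,
    dbar_sq_of_dbar_add_mul_conj_eq_zero hdiff (hdirac z hz)]
  simp
end
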